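/- Dynamic Sanov's Theorem for Sources: Let (ν_n)_{n≥1} be a sequence with ν_n ∈ R_n for each n and d(ν_n, p) → 0 for some p ∈ P(X), and let Q be a nonempty open subset of P(X). Then lim_{n→∞} (1/n)·log π_n(Q|ν_n) = L(Q‖p) − L(P(X)‖p), where L(P(X)‖p) = Σ_x p(x)·log p(x). -/

import Mathlib

open scoped BigOperators Classical
open Filter Topology

noncomputable section

def pmfSet (X : Type*) [Fintype X] : Set (X → ℝ) :=
  {p | (∀ x, 0 ≤ p x) ∧ ∑ x, p x = 1}

def Rn (X : Type*) [Fintype X] (n : ℕ) : Set (X → ℝ) :=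
  {q | q ∈ pmfSet X ∧ ∀ x, ∃ k : ℕ, q x = (k : ℝ) / (n : ℝ)}

def ratPMF (X : Type*) [Fintype X] : Set (X → ℝ) :=
  {q | q ∈ pmfSet X ∧ ∀ x, ∃ r : ℚ, q x = (r : ℝ)}

def Ldiv {X : Type*} [Fintype X] (q p : X → ℝ) : EReal :=
  ∑ x, if p x = 0 then (0 : EReal)
    else if q x = 0 then (⊥ : EReal)
    else (↑(p x * Real.log (q x)) : EReal)

def LSup {X : Type*} [Fintype X] (Q : Set (X → ℝ)) (p : X → ℝ) : EReal :=
  ⨆ q ∈ Q, Ldiv q p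

def Idiv {X : Type*} [Fintype X] (p q : X → ℝ) : EReal :=
  ∑ x, if p x = 0 then (0 : EReal)
    else if q x = 0 then (⊤ : EReal)
    else (↑(p x * Real.log (p x / q x)) : EReal)

def typeProb {X : Type*} [Fintype X] (n : ℕ) (ν q : X → ℝ) : ℝ :=
  ∏ x, q x ^ ((n : ℝ) * ν x)

def post {X : Type*} [Fintype X] (n : ℕ) (ν : X → ℝ) (Q : Set (X → ℝ)) : ℝ :=
  (∑' q : ↥(Q ∩ Rn X n), typeProb n ν ↑q) / (∑' q : ↥(Rn X n), typeProb n ν ↑q)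

def postGen {X : Type*} [Fintype X] (w : (X → ℝ) → ℝ) (n : ℕ) (ν : X → ℝ)
    (Q : Set (X → ℝ)) : ℝ :=
  (∑' q : ↥(Q ∩ Rn X n), w ↑q * typeProb n ν ↑q) /
  (∑' q : ↥(Rn X n), w ↑q * typeProb n ν ↑q)

def tv {X : Type*} [Fintype X] (p q : X → ℝ) : ℝ := (1 / 2) * ∑ x, |p x - q x|

def tvBall {X : Type*} [Fintype X] (q : X → ℝ) (ε : ℝ) : Set (X → ℝ) :=
  {p | p ∈ pmfSet X ∧ tv p q ≤ ε}

def elog (x : ℝ) : EReal := if x ≤ 0 then (⊥ : EReal) else (↑(Real.log x) : EReal)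

def linFam {X : Type*} [Fintype X] {k : ℕ} (u : Fin k → X → ℝ) (a : Fin k → ℝ) :
    Set (X → ℝ) :=
  {q | q ∈ pmfSet X ∧ ∀ j, ∑ x, q x * u j x = a j}

def lambdaN {X : Type*} [Fintype X] (w : (X → ℝ) → ℝ) (n : ℕ) (ν : X → ℝ)
    (C : Set (X → ℝ)) : EReal :=
  ⨆ q ∈ C ∩ {q | q ∈ Rn X n ∧ 0 < w q},
    (Ldiv q ν + (↑((1 : ℝ) / n * Real.log (w q)) : EReal))

def priorN {X : Type*} [Fintype X] (c : ℕ → (X → ℝ) → (X → ℝ)) (pr : (X → ℝ) → ℝ)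
    (n : ℕ) (qn : X → ℝ) : ℝ :=
  ∑' q : ↥{q | q ∈ ratPMF X ∧ c n q = qn}, pr ↑q

namespace DynSanov

variable {X : Type*} [Fintype X]

/-- real log-score -/
def ell (r q : X → ℝ) : ℝ := ∑ x, r x * Real.log (q x)

lemma pmf_le_one {q : X → ℝ} (hq : q ∈ pmfSet X) (x : X) : q x ≤ 1 := by
  have h := Finset.single_le_sum (f := q) (fun i _ => hq.1 i) (Finset.mem_univ x)
  rw [hq.2] at h; exact h

lemma Rn_zero : Rn X 0 = ∅ := by
  ext q
  simp only [Rn, Set.mem_setOf_eq, Set.mem_empty_iff_false, iff_false, not_and]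
  intro hq hk
  have h0 : ∀ x, q x = 0 := fun x => by obtain ⟨k, hk⟩ := hk x; simpa using hk
  have h1 := hq.2
  rw [Finset.sum_congr rfl fun x _ => h0 x] at h1
  simp at h1

lemma Rn_subset_range (n : ℕ) :
    Rn X n ⊆ Set.range (fun (f : X → Fin (n + 1)) => fun x => ((f x : ℕ) : ℝ) / n) := by
  rcases Nat.eq_zero_or_pos n with h | h
  · subst h; rw [Rn_zero]; exact Set.empty_subset _
  intro q hq
  choose k hk using hq.2
  have hkle : ∀ x, k x ≤ n := by
    intro x
    have h1 : q x ≤ 1 := pmf_le_one hq.1 x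
    rw [hk x] at h1
    have hn : (0:ℝ) < n := by exact_mod_cast h
    have : (k x : ℝ) ≤ n := by
      rw [div_le_one hn] at h1; exact h1
    exact_mod_cast this
  refine ⟨fun x => ⟨k x, Nat.lt_succ_of_le (hkle x)⟩, ?_⟩
  funext x
  simp [hk x]

lemma Rn_finite (n : ℕ) : (Rn X n).Finite :=
  Set.Finite.subset (Set.finite_range _) (Rn_subset_range n)

lemma Rn_card_le (n : ℕ) :
    ((Rn_finite (X := X) n).toFinset.card : ℝ) ≤ ((n : ℝ) + 1) ^ (Fintype.card X) := by
  classical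
  set g : (X → Fin (n + 1)) → (X → ℝ) := fun f x => ((f x : ℕ) : ℝ) / n with hg
  have h1 : (Rn_finite (X := X) n).toFinset ⊆ Finset.univ.image g := by
    intro a ha
    rw [Set.Finite.mem_toFinset] at ha
    obtain ⟨f, hf⟩ := Rn_subset_range n ha
    exact Finset.mem_image.2 ⟨f, Finset.mem_univ f, hf⟩
  have h2 := Finset.card_le_card h1
  have h3 := Finset.card_image_le (s := (Finset.univ : Finset (X → Fin (n+1)))) (f := g)
  have h4 : (Finset.univ : Finset (X → Fin (n+1))).card = (n + 1) ^ (Fintype.card X) := by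
    simp [Finset.card_univ, Fintype.card_fun]
  have : (Rn_finite (X := X) n).toFinset.card ≤ (n + 1) ^ (Fintype.card X) := by
    omega
  calc ((Rn_finite (X := X) n).toFinset.card : ℝ)
      ≤ (((n + 1) ^ (Fintype.card X) : ℕ) : ℝ) := by exact_mod_cast this
    _ = ((n : ℝ) + 1) ^ (Fintype.card X) := by push_cast; ring

lemma typeProb_nonneg {n : ℕ} {ν q : X → ℝ} (hq : ∀ x, 0 ≤ q x) :
    0 ≤ typeProb n ν q :=
  Finset.prod_nonneg fun x _ => Real.rpow_nonneg (hq x) _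

lemma typeProb_eq_exp {n : ℕ} {ν q : X → ℝ} (hν : ∀ x, 0 ≤ ν x)
    (hsupp : ∀ x, ν x ≠ 0 → 0 < q x) :
    typeProb n ν q = Real.exp ((n : ℝ) * ell ν q) := by
  rw [ell, Finset.mul_sum, Real.exp_sum]
  refine Finset.prod_congr rfl fun x _ => ?_
  by_cases hx : ν x = 0
  · simp [hx]
  · rw [Real.rpow_def_of_pos (hsupp x hx)]
    ring_nf

lemma typeProb_eq_zero {n : ℕ} {ν q : X → ℝ} (hn : n ≠ 0) (hν : ∀ x, 0 ≤ ν x)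
    {x0 : X} (hx0 : ν x0 ≠ 0) (hq0 : q x0 = 0) :
    typeProb n ν q = 0 := by
  apply Finset.prod_eq_zero (Finset.mem_univ x0)
  rw [hq0, Real.zero_rpow]
  exact mul_ne_zero (Nat.cast_ne_zero.2 hn) hx0

lemma ell_nonpos {r q : X → ℝ} (hr : ∀ x, 0 ≤ r x) (hq0 : ∀ x, 0 ≤ q x)
    (hq1 : ∀ x, q x ≤ 1) : ell r q ≤ 0 :=
  Finset.sum_nonpos fun x _ =>
    mul_nonpos_of_nonneg_of_nonpos (hr x) (Real.log_nonpos (hq0 x) (hq1 x))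

lemma ell_gibbs {r q : X → ℝ} (hr : r ∈ pmfSet X) (hq : q ∈ pmfSet X)
    (hsupp : ∀ x, r x ≠ 0 → q x ≠ 0) : ell r q ≤ ell r r := by
  have key : ∀ x, r x * Real.log (q x) - r x * Real.log (r x) ≤ q x - r x := by
    intro x
    by_cases hx : r x = 0
    · simp [hx, hq.1 x]
    · have hrx : 0 < r x := lt_of_le_of_ne (hr.1 x) (Ne.symm hx)
      have hqx : 0 < q x := lt_of_le_of_ne (hq.1 x) (Ne.symm (hsupp x hx))
      have hlog : Real.log (q x) - Real.log (r x) ≤ q x / r x - 1 := by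
        rw [← Real.log_div (ne_of_gt hqx) (ne_of_gt hrx)]
        exact Real.log_le_sub_one_of_pos (div_pos hqx hrx)
      have := mul_le_mul_of_nonneg_left hlog (le_of_lt hrx)
      calc r x * Real.log (q x) - r x * Real.log (r x)
          = r x * (Real.log (q x) - Real.log (r x)) := by ring
        _ ≤ r x * (q x / r x - 1) := this
        _ = q x - r x := by field_simp
  have hsum := Finset.sum_le_sum (fun x (_ : x ∈ Finset.univ) => key x)
  rw [Finset.sum_sub_distrib, Finset.sum_sub_distrib, hr.2, hq.2] at hsum
  simpa [ell] using hsum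

lemma coe_sum {α : Type*} (s : Finset α) (f : α → ℝ) :
    ((∑ x ∈ s, f x : ℝ) : EReal) = ∑ x ∈ s, (f x : EReal) :=
  map_sum (⟨⟨Real.toEReal, EReal.coe_zero⟩, fun a b => EReal.coe_add a b⟩ :
    ℝ →+ EReal) f s

lemma Ldiv_eq_coe {q p : X → ℝ} (hsupp : ∀ x, p x ≠ 0 → q x ≠ 0) :
    Ldiv q p = ((ell p q : ℝ) : EReal) := by
  rw [ell, coe_sum, Ldiv]
  refine Finset.sum_congr rfl fun x _ => ?_
  by_cases hx : p x = 0
  · simp [hx]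
  · rw [if_neg hx, if_neg (hsupp x hx)]

lemma Ldiv_eq_bot {q p : X → ℝ} {x0 : X} (hp : p x0 ≠ 0) (hq : q x0 = 0) :
    Ldiv q p = ⊥ := by
  rw [Ldiv, ← Finset.add_sum_erase _ _ (Finset.mem_univ x0), if_neg hp, if_pos hq,
    EReal.bot_add]

lemma tsum_finite {α β : Type*} [AddCommMonoid β] [TopologicalSpace β] [T2Space β]
    {s : Set α} (hs : s.Finite) (f : α → β) :
    ∑' (x : ↥s), f ↑x = ∑ x ∈ hs.toFinset, f x := by
  rw [tsum_subtype s f, tsum_eq_sum (s := hs.toFinset)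
    (fun b hb => Set.indicator_of_notMem (by simpa [Set.Finite.mem_toFinset] using hb) f)]
  exact Finset.sum_congr rfl fun x hx =>
    Set.indicator_of_mem (by simpa [Set.Finite.mem_toFinset] using hx) f

lemma En_tendsto (m : ℕ) :
    Filter.Tendsto (fun n : ℕ => (m : ℝ) * Real.log ((n : ℝ) + 1) / n)
      Filter.atTop (nhds 0) := by
  have h0 : Filter.Tendsto (fun x : ℝ => Real.log x / x) Filter.atTop (nhds 0) :=
    Real.isLittleO_log_id_atTop.tendsto_div_nhds_zero
  have hcomp : Filter.Tendsto (fun n : ℕ => ((n : ℝ) + 1)) Filter.atTop Filter.atTop :=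
    Filter.tendsto_atTop_add_const_right _ 1 tendsto_natCast_atTop_atTop
  have h1 : Filter.Tendsto (fun n : ℕ => Real.log ((n : ℝ) + 1) / ((n : ℝ) + 1))
      Filter.atTop (nhds 0) := h0.comp hcomp
  have h2 : Filter.Tendsto (fun n : ℕ => (1 : ℝ) + 1 / n) Filter.atTop (nhds 1) := by
    have := tendsto_one_div_atTop_nhds_zero_nat (𝕜 := ℝ)
    simpa using (tendsto_const_nhds (x := (1:ℝ))).add this
  have h3 := ((h1.mul h2).const_mul (m : ℝ))
  simp only [mul_zero, zero_mul] at h3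
  rw [show (0:ℝ) = (m:ℝ) * (0 * 1) by ring] at h3 ⊢
  refine h3.congr' ?_
  filter_upwards [Filter.eventually_gt_atTop 0] with n hn
  have hn' : (n : ℝ) ≠ 0 := Nat.cast_ne_zero.2 hn.ne'
  have hn1 : (n : ℝ) + 1 ≠ 0 := by positivity
  field_simp
  try ring

lemma round_exists [Nonempty X] (qs : X → ℝ) (hqs : qs ∈ pmfSet X) (n : ℕ) (hn : 1 ≤ n) :
    ∃ qn ∈ Rn X n, ∀ x, |qn x - qs x| ≤ (Fintype.card X : ℝ) / n := by
  classical
  have hnR : (0:ℝ) < n := by exact_mod_cast hn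
  set x0 : X := Classical.arbitrary X
  set k : X → ℕ := fun x => ⌊(n : ℝ) * qs x⌋₊ with hk
  have hkle : ∀ x, (k x : ℝ) ≤ (n : ℝ) * qs x := fun x =>
    Nat.floor_le (mul_nonneg (le_of_lt hnR) (hqs.1 x))
  have hkgt : ∀ x, (n : ℝ) * qs x - 1 < (k x : ℝ) := fun x => by
    have := Nat.lt_floor_add_one ((n : ℝ) * qs x); linarith
  have hKsum : ((∑ y ∈ Finset.univ.erase x0, k y : ℕ) : ℝ) ≤ (n : ℝ) := by
    push_cast
    calc ∑ y ∈ Finset.univ.erase x0, (k y : ℝ)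
        ≤ ∑ y ∈ Finset.univ.erase x0, (n : ℝ) * qs y :=
          Finset.sum_le_sum fun y _ => hkle y
      _ = (n : ℝ) * ∑ y ∈ Finset.univ.erase x0, qs y := by rw [Finset.mul_sum]
      _ ≤ (n : ℝ) * 1 := by
          apply mul_le_mul_of_nonneg_left _ (le_of_lt hnR)
          rw [← hqs.2]
          exact Finset.sum_le_sum_of_subset_of_nonneg (Finset.erase_subset _ _)
            (fun x _ _ => hqs.1 x)
      _ = (n : ℝ) := mul_one _
  have hKn : (∑ y ∈ Finset.univ.erase x0, k y) ≤ n := by exact_mod_cast hKsum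
  set qn : X → ℝ := fun x => if x = x0
    then ((n - ∑ y ∈ Finset.univ.erase x0, k y : ℕ) : ℝ) / n
    else (k x : ℝ) / n with hqn
  have hqnx0 : qn x0 = 1 - ∑ y ∈ Finset.univ.erase x0, (k y : ℝ) / n := by
    rw [hqn]; simp only [if_pos rfl]
    rw [Nat.cast_sub hKn]
    push_cast
    rw [← Finset.sum_div]
    field_simp
  have hqnsum : ∑ x, qn x = 1 := by
    rw [← Finset.add_sum_erase _ _ (Finset.mem_univ x0), hqnx0]
    have : ∑ y ∈ Finset.univ.erase x0, qn y = ∑ y ∈ Finset.univ.erase x0, (k y : ℝ) / n :=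
      Finset.sum_congr rfl fun y hy => by
        rw [hqn]; simp only [if_neg (Finset.ne_of_mem_erase hy)]
    rw [this]; ring
  have hclose : ∀ x, |qn x - qs x| ≤ (Fintype.card X : ℝ) / n := by
    intro x
    have hcard1 : (1 : ℝ) ≤ Fintype.card X := by
      exact_mod_cast Fintype.card_pos
    by_cases hx : x = x0
    · subst hx
      rw [hqnx0]
      have hsplit : qs x0 = 1 - ∑ y ∈ Finset.univ.erase x0, qs y := by
        have := hqs.2
        rw [← Finset.add_sum_erase _ _ (Finset.mem_univ x0)] at this
        linarith
      rw [hsplit]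
      have heq : 1 - (∑ y ∈ Finset.univ.erase x0, (k y : ℝ) / n) -
          (1 - ∑ y ∈ Finset.univ.erase x0, qs y)
          = ∑ y ∈ Finset.univ.erase x0, (qs y - (k y : ℝ) / n) := by
        rw [Finset.sum_sub_distrib]; ring
      rw [heq]
      have hbnd : ∀ y ∈ Finset.univ.erase x0, |qs y - (k y : ℝ) / n| ≤ 1 / n := by
        intro y _
        have h1 : (k y : ℝ) / n ≤ qs y := by
          rw [div_le_iff₀ hnR]; nlinarith [hkle y]
        have h2 : qs y - 1 / n ≤ (k y : ℝ) / n := by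
          rw [le_div_iff₀ hnR]
          have hc : (qs y - 1/(n:ℝ))*n = qs y * n - 1 := by field_simp
          rw [hc]; nlinarith [hkgt y]
        rw [abs_le]; constructor <;> linarith
      calc |∑ y ∈ Finset.univ.erase x0, (qs y - (k y : ℝ) / n)|
          ≤ ∑ y ∈ Finset.univ.erase x0, |qs y - (k y : ℝ) / n| :=
            Finset.abs_sum_le_sum_abs _ _
        _ ≤ ∑ _y ∈ Finset.univ.erase x0, (1 / n : ℝ) :=
            Finset.sum_le_sum hbnd
        _ = (Finset.univ.erase x0).card * (1 / n) := by rw [Finset.sum_const, nsmul_eq_mul]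
        _ ≤ (Fintype.card X : ℝ) * (1 / n) := by
            apply mul_le_mul_of_nonneg_right _ (by positivity)
            have := Finset.card_erase_le (s := (Finset.univ : Finset X)) (a := x0)
            calc ((Finset.univ.erase x0).card : ℝ) ≤ (Finset.univ : Finset X).card := by
                  exact_mod_cast this
              _ = Fintype.card X := by rw [Finset.card_univ]
        _ = (Fintype.card X : ℝ) / n := by ring
    · rw [hqn]; simp only [if_neg hx]
      have h1 : (k x : ℝ) / n ≤ qs x := by
        rw [div_le_iff₀ hnR]; nlinarith [hkle x]
      have h2 : qs x - 1 / n ≤ (k x : ℝ) / n := by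
        rw [le_div_iff₀ hnR]
        have hc : (qs x - 1/(n:ℝ))*n = qs x * n - 1 := by field_simp
        rw [hc]; nlinarith [hkgt x]
      have h3 : (1:ℝ)/n ≤ (Fintype.card X : ℝ)/n := (div_le_div_iff_of_pos_right hnR).2 hcard1
      rw [abs_le]; constructor <;> linarith
  refine ⟨qn, ⟨⟨fun x => ?_, hqnsum⟩, fun x => ?_⟩, hclose⟩
  · by_cases hx : x = x0
    · subst hx
      have h2 : qs x0 ≤ qn x0 := by
        rw [hqnx0]
        have hsplit : qs x0 = 1 - ∑ y ∈ Finset.univ.erase x0, qs y := by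
          have := hqs.2
          rw [← Finset.add_sum_erase _ _ (Finset.mem_univ x0)] at this
          linarith
        rw [hsplit]
        apply sub_le_sub_left
        apply Finset.sum_le_sum
        intro y _
        rw [div_le_iff₀ hnR]
        nlinarith [hkle y]
      exact le_trans (hqs.1 x0) h2
    · rw [hqn]; simp only [if_neg hx]; positivity
  · by_cases hx : x = x0
    · subst hx
      exact ⟨n - ∑ y ∈ Finset.univ.erase x0, k y, by rw [hqn]; simp⟩
    · exact ⟨k x, by rw [hqn]; simp [hx]⟩

lemma open_char {Q : Set (X → ℝ)} (hQsub : Q ⊆ pmfSet X)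
    (hQopen : IsOpen {r : ↥(pmfSet X) | ↑r ∈ Q}) {q1 : X → ℝ} (hq1 : q1 ∈ Q) :
    ∃ ε > 0, ∀ q ∈ pmfSet X, dist q q1 < ε → q ∈ Q := by
  obtain ⟨U, hUopen, hU⟩ := isOpen_induced_iff.1 hQopen
  have hq1U : q1 ∈ U := by
    have : (⟨q1, hQsub hq1⟩ : ↥(pmfSet X)) ∈ Subtype.val ⁻¹' U := by
      rw [hU]; exact hq1
    exact this
  obtain ⟨ε, hε, hball⟩ := Metric.isOpen_iff.1 hUopen q1 hq1U
  refine ⟨ε, hε, fun q hq hdist => ?_⟩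
  have : (⟨q, hq⟩ : ↥(pmfSet X)) ∈ Subtype.val ⁻¹' U := hball hdist
  rw [hU] at this
  exact this

lemma mix_pmf [Nonempty X] {q : X → ℝ} (hq : q ∈ pmfSet X) {t : ℝ} (h0 : 0 ≤ t)
    (h1 : t ≤ 1) :
    (fun x => (1 - t) * q x + t * (1 / (Fintype.card X : ℝ))) ∈ pmfSet X := by
  have hm : (0:ℝ) < Fintype.card X := by exact_mod_cast Fintype.card_pos
  constructor
  · intro x
    have := hq.1 x
    have h2 : (0:ℝ) ≤ 1 / (Fintype.card X : ℝ) := by positivity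
    nlinarith
  · rw [Finset.sum_add_distrib, ← Finset.mul_sum, hq.2, Finset.sum_const,
      Finset.card_univ, nsmul_eq_mul]
    field_simp
    ring

lemma exists_mix [Nonempty X] {Q : Set (X → ℝ)} (hQsub : Q ⊆ pmfSet X)
    (hQopen : IsOpen {r : ↥(pmfSet X) | ↑r ∈ Q}) {q1 : X → ℝ} (hq1 : q1 ∈ Q)
    {δ : ℝ} (hδ0 : 0 < δ) (hδ1 : δ ≤ 1) :
    ∃ t, 0 < t ∧ t ≤ δ ∧
      (fun x => (1 - t) * q1 x + t * (1 / (Fintype.card X : ℝ))) ∈ Q := by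
  obtain ⟨ε, hε, hball⟩ := open_char hQsub hQopen hq1
  set t := min (ε / 2) δ with ht
  have ht0 : 0 < t := lt_min (by linarith) hδ0
  have htδ : t ≤ δ := min_le_right _ _
  have ht1 : t ≤ 1 := le_trans htδ hδ1
  refine ⟨t, ht0, htδ, ?_⟩
  have hq1' := hQsub hq1
  apply hball _ (mix_pmf hq1' (le_of_lt ht0) ht1)
  rw [dist_pi_lt_iff hε]
  intro x
  rw [Real.dist_eq]
  have h1 : (1 - t) * q1 x + t * (1 / (Fintype.card X : ℝ)) - q1 x
      = t * (1 / (Fintype.card X : ℝ) - q1 x) := by ring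
  have hm : (0:ℝ) < Fintype.card X := by exact_mod_cast Fintype.card_pos
  have hm1 : (1 : ℝ) / (Fintype.card X : ℝ) ≤ 1 := by
    rw [div_le_one hm]; exact_mod_cast Fintype.card_pos
  have habs : |1 / (Fintype.card X : ℝ) - q1 x| ≤ 1 := by
    have h2 : (0:ℝ) ≤ 1 / (Fintype.card X : ℝ) := by positivity
    rw [abs_le]
    exact ⟨by linarith [pmf_le_one hq1' x], by linarith [hq1'.1 x]⟩
  rw [h1, abs_mul, abs_of_pos ht0]
  calc t * |1 / (Fintype.card X : ℝ) - q1 x| ≤ t * 1 :=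
        mul_le_mul_of_nonneg_left habs (le_of_lt ht0)
    _ = t := mul_one t
    _ ≤ ε / 2 := min_le_left _ _
    _ < ε := by linarith

lemma ell_mix [Nonempty X] {p q : X → ℝ} (hp : p ∈ pmfSet X) (hq : q ∈ pmfSet X)
    (hD : ∀ x, p x ≠ 0 → q x ≠ 0) {t : ℝ} (ht0 : 0 < t) (ht1 : t < 1) :
    ell p q + Real.log (1 - t)
      ≤ ell p (fun x => (1 - t) * q x + t * (1 / (Fintype.card X : ℝ))) := by
  have hm : (0:ℝ) < Fintype.card X := by exact_mod_cast Fintype.card_pos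
  have hre : ell p q + Real.log (1 - t)
      = ∑ x, (p x * Real.log (q x) + p x * Real.log (1 - t)) := by
    rw [Finset.sum_add_distrib, ← Finset.sum_mul, hp.2, one_mul, ell]
  rw [hre, ell]
  apply Finset.sum_le_sum
  intro x _
  by_cases hx : p x = 0
  · simp [hx]
  · have hqx : 0 < q x := lt_of_le_of_ne (hq.1 x) (Ne.symm (hD x hx))
    have hmix : (1 - t) * q x ≤ (1 - t) * q x + t * (1 / (Fintype.card X : ℝ)) := by
      have : (0:ℝ) ≤ t * (1 / (Fintype.card X : ℝ)) := by positivity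
      linarith
    have hpos : (0:ℝ) < (1 - t) * q x := mul_pos (by linarith) hqx
    have hlog : Real.log (1 - t) + Real.log (q x)
        ≤ Real.log ((1 - t) * q x + t * (1 / (Fintype.card X : ℝ))) := by
      rw [← Real.log_mul (by linarith) (ne_of_gt hqx)]
      exact Real.log_le_log hpos hmix
    calc p x * Real.log (q x) + p x * Real.log (1 - t)
        = p x * (Real.log (1 - t) + Real.log (q x)) := by ring
      _ ≤ p x * Real.log ((1 - t) * q x + t * (1 / (Fintype.card X : ℝ))) :=
          mul_le_mul_of_nonneg_left hlog (hp.1 x)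

lemma sum_abs_eq_tv (a b : X → ℝ) : ∑ x, |a x - b x| = 2 * tv a b := by
  rw [tv]; ring

lemma key_upper {p q ν : X → ℝ} (hν : ν ∈ pmfSet X) (hq : q ∈ pmfSet X)
    {GQ K pmin : ℝ} (hK : 1 ≤ K) (hGQK : -K < GQ) (hpmin : 0 < pmin)
    (hν_lb : ∀ x, p x ≠ 0 → pmin / 2 ≤ ν x)
    (hsupp : ∀ x, ν x ≠ 0 → q x ≠ 0)
    (hmem : (∀ x, p x ≠ 0 → q x ≠ 0) → ell p q ≤ GQ) :
    ell ν q ≤ GQ + (2 * K / pmin) * ∑ x, |ν x - p x| := by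
  have hKpos : (0:ℝ) < K := lt_of_lt_of_le one_pos hK
  have hcoef : (0:ℝ) ≤ 2 * K / pmin := by positivity
  have hsum_nonneg : (0:ℝ) ≤ ∑ x, |ν x - p x| :=
    Finset.sum_nonneg fun x _ => abs_nonneg _
  by_cases hc : ell ν q ≤ GQ
  · nlinarith
  push_neg at hc
  have hterm : ∀ x, ν x * Real.log (q x) ≤ 0 := fun x =>
    mul_nonpos_of_nonneg_of_nonpos (hν.1 x) (Real.log_nonpos (hq.1 x) (pmf_le_one hq x))
  have hsingle : ∀ x, ell ν q ≤ ν x * Real.log (q x) := by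
    intro x
    rw [ell, ← Finset.add_sum_erase _ _ (Finset.mem_univ x)]
    have := Finset.sum_nonpos (s := Finset.univ.erase x)
      (fun y (_ : y ∈ Finset.univ.erase x) => hterm y)
    linarith
  have hD : ∀ x, p x ≠ 0 → q x ≠ 0 := fun x hx =>
    hsupp x (ne_of_gt (lt_of_lt_of_le (half_pos hpmin) (hν_lb x hx)))
  have hellpq := hmem hD
  have hlog : ∀ x, p x ≠ 0 → |Real.log (q x)| ≤ 2 * K / pmin := by
    intro x hx
    have hνx : pmin / 2 ≤ ν x := hν_lb x hx
    have hν0 : 0 < ν x := lt_of_lt_of_le (half_pos hpmin) hνx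
    have h1 : -K < ν x * Real.log (q x) := lt_of_lt_of_le (lt_trans hGQK hc) (hsingle x)
    have hlogle : Real.log (q x) ≤ 0 := Real.log_nonpos (hq.1 x) (pmf_le_one hq x)
    have h2 : -K / ν x < Real.log (q x) := by
      rw [div_lt_iff₀ hν0]
      nlinarith
    have h3 : -(2 * K / pmin) ≤ -K / ν x := by
      rw [neg_div, neg_le_neg_iff, div_le_div_iff₀ hν0 hpmin]
      nlinarith
    rw [abs_of_nonpos hlogle]
    linarith
  have hstep : ell ν q - ell p q ≤ (2 * K / pmin) * ∑ x, |ν x - p x| := by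
    rw [ell, ell, ← Finset.sum_sub_distrib, Finset.mul_sum]
    apply Finset.sum_le_sum
    intro x _
    by_cases hx : p x = 0
    · have he : ν x * Real.log (q x) - p x * Real.log (q x) = ν x * Real.log (q x) := by
        rw [hx]; ring
      rw [he]
      exact le_trans (hterm x) (mul_nonneg hcoef (abs_nonneg _))
    · have he : ν x * Real.log (q x) - p x * Real.log (q x)
          = (ν x - p x) * Real.log (q x) := by ring
      rw [he]
      calc (ν x - p x) * Real.log (q x) ≤ |(ν x - p x) * Real.log (q x)| := le_abs_self _
        _ = |ν x - p x| * |Real.log (q x)| := abs_mul _ _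
        _ ≤ |ν x - p x| * (2 * K / pmin) :=
            mul_le_mul_of_nonneg_left (hlog x hx) (abs_nonneg _)
        _ = 2 * K / pmin * |ν x - p x| := by ring
  linarith

end DynSanov

open DynSanov in
/-- Dynamic Sanov's Theorem for Sources. -/
theorem dynamic_sanov_for_sources {X : Type*} [Fintype X] [Nonempty X]
    (ν : ℕ → X → ℝ) (hν : ∀ n, 1 ≤ n → ν n ∈ Rn X n)
    (p : X → ℝ) (hp : p ∈ pmfSet X)
    (hconv : Filter.Tendsto (fun n => tv (ν n) p) Filter.atTop (nhds 0))
    (Q : Set (X → ℝ)) (hQsub : Q ⊆ pmfSet X) (hQne : Q.Nonempty)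
    (hQopen : IsOpen {r : ↥(pmfSet X) | ↑r ∈ Q}) :
    Filter.Tendsto
      (fun n : ℕ => (↑((1 : ℝ) / (n : ℝ)) : EReal) * elog (post n (ν n) Q))
      Filter.atTop (nhds (LSup Q p - LSup (pmfSet X) p)) := by
  classical
  set m := Fintype.card X with hmdef
  -- pointwise convergence
  have hpt : ∀ x, Filter.Tendsto (fun n => ν n x) Filter.atTop (nhds (p x)) := by
    intro x
    rw [tendsto_iff_dist_tendsto_zero]
    have hbound : ∀ n, dist (ν n x) (p x) ≤ 2 * tv (ν n) p := by
      intro n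
      rw [Real.dist_eq, ← sum_abs_eq_tv]
      exact Finset.single_le_sum (f := fun y => |ν n y - p y|)
        (fun y _ => abs_nonneg _) (Finset.mem_univ x)
    have h2 : Filter.Tendsto (fun n => 2 * tv (ν n) p) Filter.atTop (nhds 0) := by
      have := hconv.const_mul (2:ℝ)
      simpa using this
    exact squeeze_zero (fun n => dist_nonneg) hbound h2
  -- finite type sets
  have Tfin : ∀ n, (Rn X n).Finite := fun n => Rn_finite n
  have TQfin : ∀ n, (Q ∩ Rn X n).Finite := fun n => (Tfin n).subset Set.inter_subset_right
  set Zn : ℕ → ℝ := fun n => ∑ q ∈ (Tfin n).toFinset, typeProb n (ν n) q with hZndef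
  set Bn : ℕ → ℝ := fun n => ∑ q ∈ (TQfin n).toFinset, typeProb n (ν n) q with hBndef
  have hpost : ∀ n, post n (ν n) Q = Bn n / Zn n := by
    intro n
    rw [post, tsum_finite (TQfin n), tsum_finite (Tfin n)]
  have hpmf : ∀ n : ℕ, 1 ≤ n → ν n ∈ pmfSet X := fun n hn => (hν n hn).1
  have hnonneg : ∀ n, ∀ q ∈ (Tfin n).toFinset, 0 ≤ typeProb n (ν n) q := by
    intro n q hq
    exact typeProb_nonneg (((Tfin n).mem_toFinset.1 hq).1.1)
  have hnonnegQ : ∀ n, ∀ q ∈ (TQfin n).toFinset, 0 ≤ typeProb n (ν n) q := by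
    intro n q hq
    exact typeProb_nonneg (((TQfin n).mem_toFinset.1 hq).2.1.1)
  have hself : ∀ n : ℕ, 1 ≤ n →
      typeProb n (ν n) (ν n) = Real.exp ((n:ℝ) * ell (ν n) (ν n)) := by
    intro n hn
    exact typeProb_eq_exp (hpmf n hn).1
      (fun x hx => lt_of_le_of_ne ((hpmf n hn).1 x) (Ne.symm hx))
  have hZpos : ∀ n : ℕ, 1 ≤ n → 0 < Zn n := by
    intro n hn
    apply Finset.sum_pos' (hnonneg n)
    refine ⟨ν n, (Tfin n).mem_toFinset.2 (hν n hn), ?_⟩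
    rw [hself n hn]
    exact Real.exp_pos _
  -- entropy sequence
  set a : ℕ → ℝ := fun n => ell (ν n) (ν n) with hadef
  have ha : Filter.Tendsto a Filter.atTop (nhds (ell p p)) := by
    apply tendsto_finset_sum
    intro x _
    exact (Real.continuous_mul_log.tendsto (p x)).comp (hpt x)
  -- denominator bounds
  have hub : ∀ n : ℕ, 1 ≤ n → ∀ q ∈ (Tfin n).toFinset,
      typeProb n (ν n) q ≤ Real.exp ((n:ℝ) * a n) := by
    intro n hn q hq
    have hqR := (Tfin n).mem_toFinset.1 hq
    by_cases hsupp : ∀ x, ν n x ≠ 0 → q x ≠ 0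
    · rw [typeProb_eq_exp (hpmf n hn).1
        (fun x hx => lt_of_le_of_ne (hqR.1.1 x) (Ne.symm (hsupp x hx)))]
      exact Real.exp_le_exp.2 (mul_le_mul_of_nonneg_left
        (ell_gibbs (hpmf n hn) hqR.1 hsupp) (Nat.cast_nonneg n))
    · push_neg at hsupp
      obtain ⟨x, hx1, hx2⟩ := hsupp
      rw [typeProb_eq_zero (Nat.one_le_iff_ne_zero.1 hn) (hpmf n hn).1 hx1 hx2]
      exact (Real.exp_pos _).le
  have hlogZ_ub : ∀ n : ℕ, 1 ≤ n →
      (1/(n:ℝ)) * Real.log (Zn n) ≤ a n + (m:ℝ) * Real.log ((n:ℝ)+1) / n := by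
    intro n hn
    have hnR : (0:ℝ) < n := by have hnn : 0 < n := hn; exact_mod_cast hnn
    have hcard_pos : 0 < (Tfin n).toFinset.card :=
      Finset.card_pos.2 ⟨ν n, (Tfin n).mem_toFinset.2 (hν n hn)⟩
    have hcardR : (0:ℝ) < ((Tfin n).toFinset.card : ℝ) := by exact_mod_cast hcard_pos
    have hZub : Zn n ≤ ((Tfin n).toFinset.card : ℝ) * Real.exp ((n:ℝ) * a n) := by
      have := Finset.sum_le_card_nsmul _ _ _ (hub n hn)
      rwa [nsmul_eq_mul] at this
    have h1 := Real.log_le_log (hZpos n hn) hZub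
    rw [Real.log_mul (ne_of_gt hcardR) (ne_of_gt (Real.exp_pos _)), Real.log_exp] at h1
    have h2 : Real.log ((Tfin n).toFinset.card : ℝ) ≤ (m:ℝ) * Real.log ((n:ℝ)+1) := by
      calc Real.log ((Tfin n).toFinset.card : ℝ)
          ≤ Real.log (((n:ℝ)+1)^m) := Real.log_le_log hcardR (Rn_card_le n)
        _ = (m:ℝ) * Real.log ((n:ℝ)+1) := by rw [Real.log_pow]
    have h3 : Real.log (Zn n) ≤ (m:ℝ) * Real.log ((n:ℝ)+1) + (n:ℝ) * a n := by linarith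
    calc (1/(n:ℝ)) * Real.log (Zn n)
        ≤ (1/(n:ℝ)) * ((m:ℝ) * Real.log ((n:ℝ)+1) + (n:ℝ) * a n) :=
          mul_le_mul_of_nonneg_left h3 (by positivity)
      _ = a n + (m:ℝ) * Real.log ((n:ℝ)+1) / n := by field_simp; ring
  have hlogZ_lb : ∀ n : ℕ, 1 ≤ n → a n ≤ (1/(n:ℝ)) * Real.log (Zn n) := by
    intro n hn
    have hnR : (0:ℝ) < n := by have hnn : 0 < n := hn; exact_mod_cast hnn
    have hZlb : Real.exp ((n:ℝ) * a n) ≤ Zn n := by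
      rw [← hself n hn]
      exact Finset.single_le_sum (hnonneg n) ((Tfin n).mem_toFinset.2 (hν n hn))
    have h1 : (n:ℝ) * a n ≤ Real.log (Zn n) :=
      (Real.le_log_iff_exp_le (hZpos n hn)).2 hZlb
    calc a n = (1/(n:ℝ)) * ((n:ℝ) * a n) := by field_simp
      _ ≤ (1/(n:ℝ)) * Real.log (Zn n) := mul_le_mul_of_nonneg_left h1 (by positivity)
  have hC1 : Filter.Tendsto (fun n : ℕ => (1/(n:ℝ)) * Real.log (Zn n))
      Filter.atTop (nhds (ell p p)) := by
    have hupper : Filter.Tendsto (fun n : ℕ => a n + (m:ℝ) * Real.log ((n:ℝ)+1) / n)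
        Filter.atTop (nhds (ell p p)) := by
      have := ha.add (En_tendsto m)
      simpa using this
    refine tendsto_of_tendsto_of_tendsto_of_le_of_le' ha hupper ?_ ?_
    · filter_upwards [Filter.eventually_ge_atTop 1] with n hn
      exact hlogZ_lb n hn
    · filter_upwards [Filter.eventually_ge_atTop 1] with n hn
      exact hlogZ_ub n hn
  -- GQ setup
  set D : Set (X → ℝ) := {q | ∀ x, p x ≠ 0 → q x ≠ 0} with hDdef
  obtain ⟨q1, hq1⟩ := hQne
  obtain ⟨t0, ht00, ht01, hq0Q⟩ := exists_mix hQsub hQopen hq1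
    (δ := (1:ℝ)/2) (by norm_num) (by norm_num)
  set q0 : X → ℝ := fun x => (1 - t0) * q1 x + t0 * (1/(Fintype.card X : ℝ)) with hq0def
  have hq0pos : ∀ x, 0 < q0 x := by
    intro x
    have h1 : (0:ℝ) ≤ (1 - t0) * q1 x :=
      mul_nonneg (by linarith) ((hQsub hq1).1 x)
    have hcard : (0:ℝ) < (Fintype.card X : ℝ) := by exact_mod_cast Fintype.card_pos
    have h2 : (0:ℝ) < t0 * (1/(Fintype.card X : ℝ)) := by positivity
    simp only [hq0def]
    linarith
  have hq0D : q0 ∈ D := fun x _ => (hq0pos x).ne'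
  set S : Set ℝ := (fun q => ell p q) '' (Q ∩ D) with hSdef
  have hq0S : ell p q0 ∈ S := ⟨q0, ⟨hq0Q, hq0D⟩, rfl⟩
  have hSne : S.Nonempty := ⟨_, hq0S⟩
  have hSbdd : BddAbove S := by
    refine ⟨0, ?_⟩
    rintro s ⟨q, hq, rfl⟩
    exact ell_nonpos hp.1 (hQsub hq.1).1 (pmf_le_one (hQsub hq.1))
  set GQ : ℝ := sSup S with hGQdef
  have hGQ_ge : ell p q0 ≤ GQ := le_csSup hSbdd hq0S
  set K : ℝ := 1 - ell p q0 with hKdef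
  have hK1 : 1 ≤ K := by
    have := ell_nonpos hp.1 (hQsub hq0Q).1 (pmf_le_one (hQsub hq0Q))
    simp only [hKdef]; linarith
  have hGQK : -K < GQ := by simp only [hKdef]; linarith
  -- pmin
  have hex : ∃ x, p x ≠ 0 := by
    by_contra h
    push_neg at h
    have h2 := hp.2
    rw [Finset.sum_congr rfl fun x _ => h x] at h2
    simp at h2
  set sp : Finset X := Finset.univ.filter (fun x => p x ≠ 0) with hspdef
  have hspne : ((sp.image p).Nonempty) := by
    refine ⟨p hex.choose, Finset.mem_image_of_mem p ?_⟩
    simp only [hspdef, Finset.mem_filter, Finset.mem_univ, true_and]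
    exact hex.choose_spec
  set pmin : ℝ := (sp.image p).min' hspne with hpmindef
  have hpmin_le : ∀ x, p x ≠ 0 → pmin ≤ p x := by
    intro x hx
    exact Finset.min'_le _ _ (Finset.mem_image_of_mem p
      (by simp only [hspdef, Finset.mem_filter, Finset.mem_univ, true_and]; exact hx))
  have hpmin_pos : 0 < pmin := by
    have hmem := (sp.image p).min'_mem hspne
    rw [Finset.mem_image] at hmem
    obtain ⟨x, hx, hpx⟩ := hmem
    simp only [hspdef, Finset.mem_filter, Finset.mem_univ, true_and] at hx
    rw [hpmindef, ← hpx]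
    exact lt_of_le_of_ne (hp.1 x) (Ne.symm hx)
  have hev : ∀ᶠ n in Filter.atTop, ∀ x, p x ≠ 0 → pmin/2 ≤ ν n x := by
    rw [Filter.eventually_all]
    intro x
    by_cases hx : p x = 0
    · filter_upwards with n
      exact fun h => absurd hx h
    · have h1 : pmin/2 < p x := lt_of_lt_of_le (by linarith) (hpmin_le x hx)
      filter_upwards [(hpt x).eventually (eventually_gt_nhds h1)] with n hn
      exact fun _ => le_of_lt hn
  -- error sequence
  set e : ℕ → ℝ := fun n => (2*K/pmin) * ∑ x, |ν n x - p x| with hedef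
  have he0 : Filter.Tendsto e Filter.atTop (nhds 0) := by
    have h1 : ∀ n, e n = (2*K/pmin) * (2 * tv (ν n) p) := by
      intro n; simp only [hedef]; rw [sum_abs_eq_tv]
    have h2 := (hconv.const_mul (2:ℝ)).const_mul (2*K/pmin)
    simp only [mul_zero] at h2
    exact Filter.Tendsto.congr (fun n => (h1 n).symm) h2
  -- numerator upper bound
  have hBub : ∀ᶠ n in Filter.atTop, ∀ q ∈ (TQfin n).toFinset,
      typeProb n (ν n) q ≤ Real.exp ((n:ℝ) * (GQ + e n)) := by
    filter_upwards [hev, Filter.eventually_ge_atTop 1] with n hn hn1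
    intro q hq
    have hqm := (TQfin n).mem_toFinset.1 hq
    by_cases hsupp : ∀ x, ν n x ≠ 0 → q x ≠ 0
    · rw [typeProb_eq_exp (hpmf n hn1).1
        (fun x hx => lt_of_le_of_ne (hqm.2.1.1 x) (Ne.symm (hsupp x hx)))]
      apply Real.exp_le_exp.2
      apply mul_le_mul_of_nonneg_left _ (Nat.cast_nonneg n)
      exact key_upper (hpmf n hn1) hqm.2.1 hK1 hGQK hpmin_pos hn hsupp
        (fun hD => le_csSup hSbdd ⟨q, ⟨hqm.1, hD⟩, rfl⟩)
    · push_neg at hsupp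
      obtain ⟨x, hx1, hx2⟩ := hsupp
      rw [typeProb_eq_zero (Nat.one_le_iff_ne_zero.1 hn1) (hpmf n hn1).1 hx1 hx2]
      exact (Real.exp_pos _).le
  have hBQcard : ∀ n, ((TQfin n).toFinset.card : ℝ) ≤ ((n:ℝ)+1)^m := by
    intro n
    have h1 : (TQfin n).toFinset ⊆ (Tfin n).toFinset :=
      Set.Finite.toFinset_subset_toFinset.2 Set.inter_subset_right
    calc ((TQfin n).toFinset.card : ℝ) ≤ ((Tfin n).toFinset.card : ℝ) := by
          exact_mod_cast Finset.card_le_card h1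
      _ ≤ ((n:ℝ)+1)^m := Rn_card_le n
  have hUB : ∀ᶠ n in Filter.atTop, 0 < Bn n →
      (1/(n:ℝ)) * Real.log (Bn n) ≤ GQ + e n + (m:ℝ) * Real.log ((n:ℝ)+1) / n := by
    filter_upwards [hBub, Filter.eventually_ge_atTop 1] with n hub2 hn1
    intro hpos
    have hnR : (0:ℝ) < n := by have hnn : 0 < n := hn1; exact_mod_cast hnn
    have hpow : (0:ℝ) < ((n:ℝ)+1)^m := by positivity
    have h1 : Bn n ≤ ((n:ℝ)+1)^m * Real.exp ((n:ℝ) * (GQ + e n)) := by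
      calc Bn n ≤ ((TQfin n).toFinset.card : ℝ) * Real.exp ((n:ℝ) * (GQ + e n)) := by
            have := Finset.sum_le_card_nsmul _ _ _ hub2
            rwa [nsmul_eq_mul] at this
        _ ≤ ((n:ℝ)+1)^m * Real.exp ((n:ℝ) * (GQ + e n)) :=
            mul_le_mul_of_nonneg_right (hBQcard n) (Real.exp_pos _).le
    have h2 : Real.log (Bn n) ≤ (m:ℝ) * Real.log ((n:ℝ)+1) + (n:ℝ) * (GQ + e n) := by
      have h3 := Real.log_le_log hpos h1
      rwa [Real.log_mul (ne_of_gt hpow) (ne_of_gt (Real.exp_pos _)), Real.log_exp,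
        Real.log_pow] at h3
    calc (1/(n:ℝ)) * Real.log (Bn n)
        ≤ (1/(n:ℝ)) * ((m:ℝ) * Real.log ((n:ℝ)+1) + (n:ℝ) * (GQ + e n)) :=
          mul_le_mul_of_nonneg_left h2 (by positivity)
      _ = GQ + e n + (m:ℝ) * Real.log ((n:ℝ)+1) / n := by field_simp; ring
  -- numerator lower bound
  have hLB : ∀ ε : ℝ, 0 < ε → ∀ᶠ n in Filter.atTop,
      0 < Bn n ∧ GQ - ε < (1/(n:ℝ)) * Real.log (Bn n) := by
    intro ε hε
    obtain ⟨s, ⟨q2, hq2QD, hq2s⟩, hs⟩ :=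
      exists_lt_of_lt_csSup hSne (show GQ - ε/4 < GQ by linarith)
    rw [← hq2s] at hs
    have hq2Q : q2 ∈ Q := hq2QD.1
    have hq2D : ∀ x, p x ≠ 0 → q2 x ≠ 0 := hq2QD.2
    have hexp1 : Real.exp (-(ε/4)) < 1 := Real.exp_lt_one_iff.2 (by linarith)
    set dl : ℝ := min (1/2) (1 - Real.exp (-(ε/4))) with hdldef
    have hdl0 : 0 < dl := lt_min (by norm_num) (by linarith)
    have hdl1 : dl ≤ 1 := le_trans (min_le_left _ _) (by norm_num)
    obtain ⟨t, ht0, htdl, hqsQ⟩ := exists_mix hQsub hQopen hq2Q hdl0 hdl1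
    set qs : X → ℝ := fun x => (1 - t) * q2 x + t * (1/(Fintype.card X : ℝ)) with hqsdef
    have ht1 : t < 1 := lt_of_le_of_lt (le_trans htdl (min_le_left _ _)) (by norm_num)
    have hqspmf : qs ∈ pmfSet X := hQsub hqsQ
    have hcard : (0:ℝ) < (Fintype.card X : ℝ) := by exact_mod_cast Fintype.card_pos
    have hqs_pos : ∀ x, 0 < qs x := by
      intro x
      have h1 : (0:ℝ) ≤ (1 - t) * q2 x :=
        mul_nonneg (by linarith) ((hQsub hq2Q).1 x)
      have h2 : (0:ℝ) < t * (1/(Fintype.card X : ℝ)) := by positivity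
      simp only [hqsdef]; linarith
    have hqs_ell : GQ - ε/2 < ell p qs := by
      have h1 := ell_mix hp (hQsub hq2Q) hq2D ht0 ht1
      have h2 : -(ε/4) ≤ Real.log (1 - t) := by
        have h3 : Real.exp (-(ε/4)) ≤ 1 - t := by
          have := le_trans htdl (min_le_right _ _)
          linarith
        calc -(ε/4) = Real.log (Real.exp (-(ε/4))) := (Real.log_exp _).symm
          _ ≤ Real.log (1-t) := Real.log_le_log (Real.exp_pos _) h3
      simp only [hqsdef]
      have := h1
      linarith
    -- minimum of qs
    have hqsne : ((Finset.univ : Finset X).image qs).Nonempty :=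
      ⟨qs (Classical.arbitrary X), Finset.mem_image_of_mem qs (Finset.mem_univ _)⟩
    set cmin : ℝ := ((Finset.univ : Finset X).image qs).min' hqsne with hcmindef
    have hcmin_le : ∀ x, cmin ≤ qs x := fun x =>
      Finset.min'_le _ _ (Finset.mem_image_of_mem qs (Finset.mem_univ x))
    have hcmin_pos : 0 < cmin := by
      have hmem := ((Finset.univ : Finset X).image qs).min'_mem hqsne
      rw [Finset.mem_image] at hmem
      obtain ⟨x, _, hx⟩ := hmem
      rw [hcmindef, ← hx]
      exact hqs_pos x
    obtain ⟨εb, hεb, hball⟩ := open_char hQsub hQopen hqsQ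
    -- rounding sequence
    have hround : ∀ n : ℕ, 1 ≤ n →
        ∃ qn, qn ∈ Rn X n ∧ ∀ x, |qn x - qs x| ≤ (m:ℝ)/n := by
      intro n hn
      obtain ⟨qn, h1, h2⟩ := round_exists qs hqspmf n hn
      exact ⟨qn, h1, h2⟩
    choose! qseq hqseq1 hqseq2 using hround
    have hmn0 : Filter.Tendsto (fun n : ℕ => (m:ℝ)/n) Filter.atTop (nhds 0) :=
      tendsto_const_div_atTop_nhds_zero_nat (m:ℝ)
    have hq_tend : ∀ x, Filter.Tendsto (fun n => qseq n x) Filter.atTop (nhds (qs x)) := by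
      intro x
      rw [tendsto_iff_dist_tendsto_zero]
      apply squeeze_zero' (Filter.Eventually.of_forall fun n => dist_nonneg)
        _ hmn0
      filter_upwards [Filter.eventually_ge_atTop 1] with n hn
      rw [Real.dist_eq]
      exact hqseq2 n hn x
    have hell_tend : Filter.Tendsto (fun n => ell (ν n) (qseq n))
        Filter.atTop (nhds (ell p qs)) := by
      apply tendsto_finset_sum
      intro x _
      exact (hpt x).mul
        (((Real.continuousAt_log (hqs_pos x).ne').tendsto).comp (hq_tend x))
    have hev2 : ∀ᶠ n in Filter.atTop, GQ - ε < ell (ν n) (qseq n) :=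
      hell_tend.eventually (eventually_gt_nhds (by linarith))
    have hev3 : ∀ᶠ n in Filter.atTop, ∀ x, cmin/2 ≤ qseq n x := by
      filter_upwards [hmn0.eventually (eventually_lt_nhds (half_pos hcmin_pos)),
        Filter.eventually_ge_atTop 1] with n h1 hn1
      intro x
      have h2 := hqseq2 n hn1 x
      have h3 : -(↑m / ↑n : ℝ) ≤ qseq n x - qs x := (abs_le.1 h2).1
      have h4 : cmin ≤ qs x := hcmin_le x
      have h5 : (↑m / ↑n : ℝ) < cmin / 2 := h1
      have h6 : cmin / 2 ≤ cmin - (↑m / ↑n : ℝ) := by linarith [h5]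
      have h7 : cmin - (↑m / ↑n : ℝ) ≤ qs x - (↑m / ↑n : ℝ) := sub_le_sub_right h4 _
      have h8 : qs x - (↑m / ↑n : ℝ) ≤ qseq n x := by linarith [h3]
      linarith [h6, h7, h8]
    have hev4 : ∀ᶠ n in Filter.atTop, qseq n ∈ Q := by
      filter_upwards [hmn0.eventually (eventually_lt_nhds hεb),
        Filter.eventually_ge_atTop 1] with n h1 hn1
      apply hball _ (hqseq1 n hn1).1
      rw [dist_pi_lt_iff hεb]
      intro x
      rw [Real.dist_eq]
      exact lt_of_le_of_lt (hqseq2 n hn1 x) h1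
    filter_upwards [hev2, hev3, hev4, Filter.eventually_ge_atTop 1] with n h2 h3 h4 hn1
    have hnR : (0:ℝ) < n := by have hnn : 0 < n := hn1; exact_mod_cast hnn
    have hmemQ : qseq n ∈ (TQfin n).toFinset :=
      (TQfin n).mem_toFinset.2 ⟨h4, hqseq1 n hn1⟩
    have hterm : typeProb n (ν n) (qseq n) = Real.exp ((n:ℝ) * ell (ν n) (qseq n)) :=
      typeProb_eq_exp (hpmf n hn1).1
        (fun x _ => lt_of_lt_of_le (half_pos hcmin_pos) (h3 x))
    have hBlb : Real.exp ((n:ℝ) * ell (ν n) (qseq n)) ≤ Bn n := by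
      rw [← hterm]
      exact Finset.single_le_sum (hnonnegQ n) hmemQ
    have hpos : 0 < Bn n := lt_of_lt_of_le (Real.exp_pos _) hBlb
    refine ⟨hpos, ?_⟩
    have h6 : (n:ℝ) * ell (ν n) (qseq n) ≤ Real.log (Bn n) :=
      (Real.le_log_iff_exp_le hpos).2 hBlb
    have h5 : (n:ℝ) * (GQ - ε) < (n:ℝ) * ell (ν n) (qseq n) :=
      mul_lt_mul_of_pos_left h2 hnR
    calc GQ - ε = (1/(n:ℝ)) * ((n:ℝ) * (GQ - ε)) := by field_simp
      _ < (1/(n:ℝ)) * Real.log (Bn n) := by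
          apply mul_lt_mul_of_pos_left _ (by positivity)
          linarith
  -- numerator convergence
  have hC2 : Filter.Tendsto (fun n : ℕ => (1/(n:ℝ)) * Real.log (Bn n))
      Filter.atTop (nhds GQ) := by
    rw [tendsto_order]
    constructor
    · intro b hb
      filter_upwards [hLB (GQ - b) (by linarith)] with n hn
      linarith [hn.2]
    · intro b hb
      have hsum0 : Filter.Tendsto (fun n : ℕ => e n + (m:ℝ) * Real.log ((n:ℝ)+1) / n)
          Filter.atTop (nhds 0) := by
        have := he0.add (En_tendsto m)
        simpa using this
      filter_upwards [hUB, hsum0.eventually (eventually_lt_nhds (by linarith : (0:ℝ) < b - GQ)),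
        hLB 1 one_pos] with n h1 h2 h3
      have := h1 h3.1
      linarith
  -- combine
  have hr : Filter.Tendsto
      (fun n : ℕ => (1/(n:ℝ)) * Real.log (Bn n) - (1/(n:ℝ)) * Real.log (Zn n))
      Filter.atTop (nhds (GQ - ell p p)) := hC2.sub hC1
  -- identify LSup values
  have hLQle : LSup Q p ≤ ((GQ : ℝ) : EReal) := by
    rw [LSup]
    apply iSup₂_le
    intro q hq
    by_cases hD2 : ∀ x, p x ≠ 0 → q x ≠ 0
    · rw [Ldiv_eq_coe hD2]
      exact EReal.coe_le_coe_iff.2 (le_csSup hSbdd ⟨q, ⟨hq, hD2⟩, rfl⟩)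
    · push_neg at hD2
      obtain ⟨x, hx1, hx2⟩ := hD2
      rw [Ldiv_eq_bot hx1 hx2]
      exact bot_le
  have hLQge1 : ((ell p q0 : ℝ) : EReal) ≤ LSup Q p := by
    rw [LSup]
    exact le_iSup₂_of_le q0 hq0Q (le_of_eq (Ldiv_eq_coe hq0D).symm)
  have hLQ : LSup Q p = ((GQ : ℝ) : EReal) := by
    have hnetop : LSup Q p ≠ ⊤ := ne_top_of_le_ne_top (EReal.coe_ne_top GQ) hLQle
    have hnebot : LSup Q p ≠ ⊥ := fun h => by
      rw [h] at hLQge1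
      exact (EReal.coe_ne_bot _) (le_bot_iff.1 hLQge1)
    set tval := (LSup Q p).toReal with htval
    have hts : LSup Q p = (tval : EReal) := (EReal.coe_toReal hnetop hnebot).symm
    have h1 : GQ ≤ tval := by
      apply csSup_le hSne
      rintro s ⟨q, ⟨hqQ, hqD⟩, rfl⟩
      have h2 : ((ell p q : ℝ) : EReal) ≤ LSup Q p := by
        rw [LSup]
        exact le_iSup₂_of_le q hqQ (le_of_eq (Ldiv_eq_coe hqD).symm)
      rw [hts] at h2
      exact EReal.coe_le_coe_iff.1 h2
    have h2 : tval ≤ GQ := by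
      rw [hts] at hLQle
      exact EReal.coe_le_coe_iff.1 hLQle
    rw [hts]
    exact congrArg _ (le_antisymm h2 h1)
  have hLP : LSup (pmfSet X) p = ((ell p p : ℝ) : EReal) := by
    apply le_antisymm
    · rw [LSup]
      apply iSup₂_le
      intro q hq
      by_cases hD2 : ∀ x, p x ≠ 0 → q x ≠ 0
      · rw [Ldiv_eq_coe hD2]
        exact EReal.coe_le_coe_iff.2 (ell_gibbs hp hq hD2)
      · push_neg at hD2
        obtain ⟨x, hx1, hx2⟩ := hD2
        rw [Ldiv_eq_bot hx1 hx2]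
        exact bot_le
    · rw [LSup]
      exact le_iSup₂_of_le p hp (le_of_eq (Ldiv_eq_coe (fun x hx => hx)).symm)
  rw [hLQ, hLP, ← EReal.coe_sub]
  refine Filter.Tendsto.congr' ?_ (EReal.tendsto_coe.2 hr)
  filter_upwards [hLB 1 one_pos, Filter.eventually_ge_atTop 1] with n hB1 hn1
  have hZp := hZpos n hn1
  have hBp := hB1.1
  have hppost : post n (ν n) Q = Bn n / Zn n := hpost n
  have hpostpos : 0 < post n (ν n) Q := by
    rw [hppost]
    exact div_pos hBp hZp
  have h1 : elog (post n (ν n) Q) = ((Real.log (Bn n / Zn n) : ℝ) : EReal) := by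
    rw [elog, if_neg (not_le.2 hpostpos), hppost]
  rw [h1, ← EReal.coe_mul]
  norm_cast
  rw [Real.log_div (ne_of_gt hBp) (ne_of_gt hZp)]
  ring
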